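/- arXiv:2103.16535 — 3 statements merged into one kernel-verified Lean document; each statement's English description precedes it below -/
import Mathlib

section
/- Let 0 < ε < 1/2 and d, δ ∈ [0, 1] with δ ≥ 4ε. Let (V_1, V_2) be an (ε, d, δ)-super-regular pair in a graph G. Let X_i ⊆ V_i for i ∈ {1, 2}, and let Y_1, Y_2 be disjoint subsets of V(G) \ (V_1 ∪ V_2). Suppose that for each i ∈ {1, 2} we have |X_i|, |Y_i| ≤ ε²|V_i| and deg(v, V_i) ≥ δ|V_i| for every v ∈ Y_{3−i}. Then the pair ((V_1 \ X_1) ∪ Y_1, (V_2 \ X_2) ∪ Y_2) is (8ε, d − 8ε, δ/2)-super-regular. -/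
open Finset

/-- The edge density `d(A, B) = e(A, B)/(|A||B|)` between two vertex sets. -/
noncomputable def eDensity {α : Type*} (G : SimpleGraph α) (A B : Finset α) : ℝ :=
  (Set.ncard {p : α × α | p.1 ∈ A ∧ p.2 ∈ B ∧ G.Adj p.1 p.2} : ℝ) /
    ((A.card : ℝ) * (B.card : ℝ))

/-- The pair `(V₁, V₂)` is `ε`-regular in `G`: all subpairs of relative size at least `ε`
have density within `ε` of `d(V₁, V₂)`. -/
def IsRegularPair {α : Type*} (G : SimpleGraph α) (ε : ℝ) (V₁ V₂ : Finset α) : Prop :=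
  ∀ U₁ ⊆ V₁, ∀ U₂ ⊆ V₂,
    ε * (V₁.card : ℝ) ≤ (U₁.card : ℝ) → ε * (V₂.card : ℝ) ≤ (U₂.card : ℝ) →
    |eDensity G U₁ U₂ - eDensity G V₁ V₂| ≤ ε

/-- The number of neighbours of `v` inside `A`. -/
noncomputable def degIn {α : Type*} (G : SimpleGraph α) (v : α) (A : Finset α) : ℕ :=
  Set.ncard {u : α | u ∈ A ∧ G.Adj v u}

/-- The pair `(V₁, V₂)` is `(ε, d, δ)`-super-regular in `G`: it is `ε`-regular, has density
at least `d`, and every vertex of one side has at least a `δ`-fraction of the other side as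
neighbours. -/
def IsSuperRegularPair {α : Type*} (G : SimpleGraph α) (ε d δ : ℝ)
    (V₁ V₂ : Finset α) : Prop :=
  IsRegularPair G ε V₁ V₂ ∧ d ≤ eDensity G V₁ V₂ ∧
  (∀ v ∈ V₂, δ * (V₁.card : ℝ) ≤ (degIn G v V₁ : ℝ)) ∧
  (∀ v ∈ V₁, δ * (V₂.card : ℝ) ≤ (degIn G v V₂ : ℝ))

open Classical in
noncomputable def eCount {α : Type*} (G : SimpleGraph α) (A B : Finset α) : ℕ :=
  ((A ×ˢ B).filter fun p => G.Adj p.1 p.2).card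

open Classical in
lemma eDensity_eq {α : Type*} (G : SimpleGraph α) (A B : Finset α) :
    eDensity G A B = (eCount G A B : ℝ) / ((A.card : ℝ) * (B.card : ℝ)) := by
  unfold eDensity eCount
  congr 2
  rw [← Set.ncard_coe_finset]
  congr 1
  ext ⟨a, b⟩
  simp [and_assoc]

open Classical in
lemma degIn_eq {α : Type*} (G : SimpleGraph α) (v : α) (A : Finset α) :
    degIn G v A = (A.filter fun u => G.Adj v u).card := by
  unfold degIn
  rw [← Set.ncard_coe_finset]
  congr 1
  ext u
  simp

lemma degIn_mono {α : Type*} (G : SimpleGraph α) (v : α) {A B : Finset α} (h : A ⊆ B) :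
    degIn G v A ≤ degIn G v B := by
  classical
  rw [degIn_eq, degIn_eq]
  exact card_le_card (filter_subset_filter _ h)

lemma degIn_sdiff {α : Type*} [DecidableEq α] (G : SimpleGraph α) (v : α) (A X : Finset α) :
    degIn G v A ≤ degIn G v (A \ X) + X.card := by
  classical
  rw [degIn_eq, degIn_eq]
  calc (A.filter fun u => G.Adj v u).card
      ≤ (((A \ X) ∪ X).filter fun u => G.Adj v u).card := by
        apply card_le_card
        apply filter_subset_filter
        intro a ha
        by_cases hx : a ∈ X <;> simp [ha, hx]
    _ ≤ ((A \ X).filter fun u => G.Adj v u).card + (X.filter fun u => G.Adj v u).card := by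
        rw [filter_union]; exact card_union_le _ _
    _ ≤ ((A \ X).filter fun u => G.Adj v u).card + X.card :=
        add_le_add_right (card_filter_le _ _) _

lemma eCount_mono {α : Type*} (G : SimpleGraph α) {A B A' B' : Finset α}
    (hA : A ⊆ A') (hB : B ⊆ B') : eCount G A B ≤ eCount G A' B' := by
  classical
  exact card_le_card (filter_subset_filter _ (product_subset_product hA hB))

lemma eCount_le {α : Type*} (G : SimpleGraph α) (A B : Finset α) :
    eCount G A B ≤ A.card * B.card := by
  classical
  exact (card_filter_le _ _).trans_eq (card_product _ _)

open Classical in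
lemma eCount_union_left {α : Type*} [DecidableEq α] (G : SimpleGraph α) (A A' B : Finset α) :
    eCount G (A ∪ A') B ≤ eCount G A B + eCount G A' B := by
  unfold eCount
  rw [union_product, filter_union]
  exact card_union_le _ _

open Classical in
lemma eCount_union_right {α : Type*} [DecidableEq α] (G : SimpleGraph α) (A B B' : Finset α) :
    eCount G A (B ∪ B') ≤ eCount G A B + eCount G A B' := by
  unfold eCount
  rw [product_union, filter_union]
  exact card_union_le _ _

lemma eCount_sandwich {α : Type*} [DecidableEq α] (G : SimpleGraph α)
    {U₁ U₂ U₁' U₂' : Finset α} (h₁ : U₁ ⊆ U₁') (h₂ : U₂ ⊆ U₂') :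
    eCount G U₁' U₂' ≤ eCount G U₁ U₂ + U₁.card * (U₂' \ U₂).card
      + (U₁' \ U₁).card * U₂'.card := by
  calc eCount G U₁' U₂' = eCount G (U₁ ∪ (U₁' \ U₁)) U₂' := by rw [union_sdiff_of_subset h₁]
    _ ≤ eCount G U₁ U₂' + eCount G (U₁' \ U₁) U₂' := eCount_union_left G _ _ _
    _ = eCount G U₁ (U₂ ∪ (U₂' \ U₂)) + eCount G (U₁' \ U₁) U₂' := by
        rw [union_sdiff_of_subset h₂]
    _ ≤ (eCount G U₁ U₂ + eCount G U₁ (U₂' \ U₂)) + eCount G (U₁' \ U₁) U₂' :=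
        add_le_add_left (eCount_union_right G _ _ _) _
    _ ≤ (eCount G U₁ U₂ + U₁.card * (U₂' \ U₂).card) + (U₁' \ U₁).card * U₂'.card :=
        add_le_add (add_le_add_right (eCount_le G _ _) _) (eCount_le G _ _)

lemma eDensity_empty_left {α : Type*} (G : SimpleGraph α) (B : Finset α) :
    eDensity G (∅ : Finset α) B = 0 := by
  simp [eDensity]

lemma eDensity_empty_right {α : Type*} (G : SimpleGraph α) (A : Finset α) :
    eDensity G A (∅ : Finset α) = 0 := by
  simp [eDensity]

set_option maxHeartbeats 1000000 in
lemma eDensity_pert {α : Type*} [DecidableEq α] (G : SimpleGraph α) (t : ℝ)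
    {U₁ U₂ U₁' U₂' : Finset α}
    (h₁ : U₁ ⊆ U₁') (h₂ : U₂ ⊆ U₂') (ht0 : 0 ≤ t) (ht : t ≤ 1/2)
    (hc1 : 0 < (U₁'.card : ℝ)) (hc2 : 0 < (U₂'.card : ℝ))
    (hd1 : (U₁'.card : ℝ) - U₁.card ≤ t * U₁'.card)
    (hd2 : (U₂'.card : ℝ) - U₂.card ≤ t * U₂'.card) :
    |eDensity G U₁' U₂' - eDensity G U₁ U₂| ≤ 2 * t := by
  set a := (U₁.card : ℝ) with ha_def
  set b := (U₂.card : ℝ) with hb_def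
  set a' := (U₁'.card : ℝ) with ha'_def
  set b' := (U₂'.card : ℝ) with hb'_def
  have ha : (1 - t) * a' ≤ a := by linarith
  have hb : (1 - t) * b' ≤ b := by linarith
  have ha0 : 0 < a := by nlinarith
  have hb0 : 0 < b := by nlinarith
  have haa' : a ≤ a' := by exact_mod_cast Nat.cast_le.mpr (card_le_card h₁)
  have hbb' : b ≤ b' := by exact_mod_cast Nat.cast_le.mpr (card_le_card h₂)
  have hab : (0:ℝ) < a * b := mul_pos ha0 hb0
  have hab' : (0:ℝ) < a' * b' := mul_pos hc1 hc2
  set e := (eCount G U₁ U₂ : ℝ) with he_def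
  set e' := (eCount G U₁' U₂' : ℝ) with he'_def
  have he0 : 0 ≤ e := by positivity
  have hee : e ≤ e' := by exact_mod_cast Nat.cast_le.mpr (eCount_mono G h₁ h₂)
  have heab : e ≤ a * b := by
    rw [he_def, ha_def, hb_def]
    exact_mod_cast eCount_le G U₁ U₂
  have hsd1 : ((U₁' \ U₁).card : ℝ) = a' - a := by
    rw [card_sdiff_of_subset h₁, Nat.cast_sub (card_le_card h₁)]
  have hsd2 : ((U₂' \ U₂).card : ℝ) = b' - b := by
    rw [card_sdiff_of_subset h₂, Nat.cast_sub (card_le_card h₂)]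
  have he' : e' ≤ e + a * (b' - b) + (a' - a) * b' := by
    have := eCount_sandwich G h₁ h₂
    have := (Nat.cast_le (α := ℝ)).mpr this
    push_cast at this
    rw [hsd1, hsd2] at this
    linarith
  rw [eDensity_eq, eDensity_eq]
  set q := e / (a * b) with hq_def
  have hq : e = q * (a * b) := by rw [hq_def]; field_simp
  have hq0 : 0 ≤ q := div_nonneg he0 hab.le
  have hq1 : q ≤ 1 := by rw [hq_def]; exact div_le_one_of_le₀ heab hab.le
  rw [abs_le]
  have h1t : (0:ℝ) < 1 - t := by linarith
  constructor
  · have key : e / (a' * b') ≤ e' / (a' * b') := div_le_div_of_nonneg_right hee hab'.le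
    have key2 : q - 2 * t ≤ e / (a' * b') := by
      rw [le_div_iff₀ hab']
      have h5 : ((1-t)*a')*((1-t)*b') ≤ a*b :=
        mul_le_mul ha hb (mul_nonneg h1t.le hc2.le) ha0.le
      have h6 : q*(((1-t)*a')*((1-t)*b')) ≤ q*(a*b) :=
        mul_le_mul_of_nonneg_left h5 hq0
      nlinarith [mul_nonneg (mul_nonneg ht0 (sub_nonneg.mpr hq1)) hab'.le,
        mul_nonneg (mul_nonneg hq0 (mul_self_nonneg t)) hab'.le]
    linarith
  · have key : e' / (a' * b') ≤ q + 2 * t := by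
      rw [div_le_iff₀ hab']
      have h7 : a*(b'-b) ≤ a'*(t*b') := mul_le_mul haa' hd2 (by linarith) (by linarith)
      have h8 : (a'-a)*b' ≤ (t*a')*b' := mul_le_mul_of_nonneg_right hd1 hc2.le
      have h9 : q*(a*b) ≤ q*(a'*b') :=
        mul_le_mul_of_nonneg_left (mul_le_mul haa' hbb' hb0.le hc1.le) hq0
      linarith [h7, h8, h9]
    linarith

lemma side_card {α : Type*} [DecidableEq α] {ε : ℝ} (hε : 0 < ε) (hε2 : ε < 1/2)
    {V X Y : Finset α} (hX : X ⊆ V) (hYV : Disjoint Y V)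
    (hXc : (X.card : ℝ) ≤ ε^2 * V.card) (hYc : (Y.card : ℝ) ≤ ε^2 * V.card) :
    ((((V \ X) ∪ Y).card : ℝ) = (V.card : ℝ) - X.card + Y.card) ∧
    (1 - ε^2) * V.card ≤ (((V \ X) ∪ Y).card : ℝ) ∧
    ((((V \ X) ∪ Y).card : ℝ) ≤ (1 + ε^2) * V.card) := by
  have hd : Disjoint (V \ X) Y := (hYV.symm).mono_left sdiff_subset
  have h1 : ((V \ X) ∪ Y).card = (V.card - X.card) + Y.card := by
    rw [card_union_of_disjoint hd, card_sdiff_of_subset hX]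
  have h2 : ((((V \ X) ∪ Y).card : ℝ)) = (V.card : ℝ) - X.card + Y.card := by
    rw [h1, Nat.cast_add, Nat.cast_sub (card_le_card hX)]
  refine ⟨h2, ?_, ?_⟩
  · rw [h2]; have := Nat.cast_nonneg (α := ℝ) Y.card; linarith
  · rw [h2]; have := Nat.cast_nonneg (α := ℝ) X.card; linarith

lemma side_sub {α : Type*} [DecidableEq α] {ε : ℝ} (hε : 0 < ε) (hε2 : ε < 1/2)
    {V X Y U' : Finset α} (hX : X ⊆ V) (hYV : Disjoint Y V)
    (hn : 0 < (V.card : ℝ))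
    (hXc : (X.card : ℝ) ≤ ε^2 * V.card) (hYc : (Y.card : ℝ) ≤ ε^2 * V.card)
    (hU' : U' ⊆ (V \ X) ∪ Y) (hc : 8 * ε * ((((V \ X) ∪ Y)).card : ℝ) ≤ (U'.card : ℝ)) :
    (U' \ Y ⊆ V) ∧ ε * (V.card : ℝ) ≤ ((U' \ Y).card : ℝ) ∧
    ((U'.card : ℝ) - ((U' \ Y).card : ℝ) ≤ (ε/6) * U'.card) ∧ 0 < (U'.card : ℝ) := by
  have hε4 : ε^2 ≤ 1/4 := by nlinarith
  obtain ⟨-, hml, -⟩ := side_card hε hε2 hX hYV hXc hYc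
  have hU'c : 6 * ε * (V.card : ℝ) ≤ (U'.card : ℝ) := by
    nlinarith [mul_le_mul_of_nonneg_left hml (show (0:ℝ) ≤ 8 * ε by linarith),
      mul_nonneg (mul_nonneg hε.le hε.le) hn.le]
  have hsub : U' \ Y ⊆ V := by
    intro a ha
    obtain ⟨ha', hay⟩ := mem_sdiff.mp ha
    rcases mem_union.mp (hU' ha') with h | h
    · exact (mem_sdiff.mp h).1
    · exact absurd h hay
  have hdiff : (U'.card : ℝ) - ((U' \ Y).card : ℝ) ≤ (Y.card : ℝ) := by
    have := card_le_card_sdiff_add_card (s := U') (t := Y)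
    have := (Nat.cast_le (α := ℝ)).mpr this
    push_cast at this
    linarith
  refine ⟨hsub, ?_, ?_, ?_⟩
  · have : ε^2 * (V.card : ℝ) ≤ ε * (V.card : ℝ) := by nlinarith
    linarith
  · nlinarith [mul_le_mul_of_nonneg_left hU'c (show (0:ℝ) ≤ ε/6 by linarith)]
  · nlinarith


set_option maxHeartbeats 1600000 in
/-- Removing few vertices from a super-regular pair and adding few new vertices of large
degree leaves a super-regular pair: if `(V₁, V₂)` is `(ε, d, δ)`-super-regular with
`δ ≥ 4ε`, `X_i ⊆ V_i` and `Y₁, Y₂` are disjoint sets outside `V₁ ∪ V₂` with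
`|X_i|, |Y_i| ≤ ε²|V_i|` and every vertex of `Y_{3−i}` having at least `δ|V_i|` neighbours
in `V_i`, then `((V₁ \ X₁) ∪ Y₁, (V₂ \ X₂) ∪ Y₂)` is `(8ε, d − 8ε, δ/2)`-super-regular. -/
theorem robust_superregular {α : Type*} [DecidableEq α] (G : SimpleGraph α) (ε d δ : ℝ)
    (hε : 0 < ε) (hε2 : ε < 1 / 2) (hd0 : 0 ≤ d) (hd1 : d ≤ 1)
    (hδ0 : 0 ≤ δ) (hδ1 : δ ≤ 1) (hδε : 4 * ε ≤ δ)
    (V₁ V₂ : Finset α) (hdisj : Disjoint V₁ V₂)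
    (hsr : IsSuperRegularPair G ε d δ V₁ V₂)
    (X₁ X₂ Y₁ Y₂ : Finset α) (hX₁ : X₁ ⊆ V₁) (hX₂ : X₂ ⊆ V₂)
    (hY : Disjoint Y₁ Y₂)
    (hY₁V : Disjoint Y₁ (V₁ ∪ V₂)) (hY₂V : Disjoint Y₂ (V₁ ∪ V₂))
    (hX₁c : (X₁.card : ℝ) ≤ ε ^ 2 * (V₁.card : ℝ))
    (hX₂c : (X₂.card : ℝ) ≤ ε ^ 2 * (V₂.card : ℝ))
    (hY₁c : (Y₁.card : ℝ) ≤ ε ^ 2 * (V₁.card : ℝ))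
    (hY₂c : (Y₂.card : ℝ) ≤ ε ^ 2 * (V₂.card : ℝ))
    (hdegY₂ : ∀ v ∈ Y₂, δ * (V₁.card : ℝ) ≤ (degIn G v V₁ : ℝ))
    (hdegY₁ : ∀ v ∈ Y₁, δ * (V₂.card : ℝ) ≤ (degIn G v V₂ : ℝ)) :
    IsSuperRegularPair G (8 * ε) (d - 8 * ε) (δ / 2)
      ((V₁ \ X₁) ∪ Y₁) ((V₂ \ X₂) ∪ Y₂) := by
  obtain ⟨hreg, hdens, hdeg₂, hdeg₁⟩ := hsr
  have hε4 : ε^2 ≤ 1/4 := by nlinarith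
  have hεε : ε^2 ≤ ε/2 := by nlinarith
  have hY₁V₁ : Disjoint Y₁ V₁ := (disjoint_union_right.mp hY₁V).1
  have hY₂V₂ : Disjoint Y₂ V₂ := (disjoint_union_right.mp hY₂V).2
  rcases V₁.eq_empty_or_nonempty with h₁ | hne₁
  · subst h₁
    have hX : X₁ = ∅ := subset_empty.mp hX₁
    have hYe : Y₁ = ∅ := by
      rw [← card_eq_zero]
      have h0 : (Y₁.card : ℝ) ≤ 0 := by simpa using hY₁c
      exact_mod_cast le_antisymm (by exact_mod_cast h0) (Nat.zero_le _)
    subst hX hYe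
    simp only [sdiff_empty, union_empty, empty_union]
    rw [eDensity_empty_left] at hdens
    refine ⟨?_, ?_, ?_, ?_⟩
    · intro U₁ hU₁ U₂ hU₂ _ _
      rw [subset_empty.mp hU₁, eDensity_empty_left, eDensity_empty_left]
      simp; linarith
    · rw [eDensity_empty_left]; linarith
    · intro v hv; simp only [card_empty, Nat.cast_zero, mul_zero]; positivity
    · intro v hv; simp at hv
  rcases V₂.eq_empty_or_nonempty with h₂ | hne₂
  · subst h₂
    have hX : X₂ = ∅ := subset_empty.mp hX₂
    have hYe : Y₂ = ∅ := by
      rw [← card_eq_zero]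
      have h0 : (Y₂.card : ℝ) ≤ 0 := by simpa using hY₂c
      exact_mod_cast le_antisymm (by exact_mod_cast h0) (Nat.zero_le _)
    subst hX hYe
    simp only [sdiff_empty, union_empty, empty_union]
    rw [eDensity_empty_right] at hdens
    refine ⟨?_, ?_, ?_, ?_⟩
    · intro U₁ hU₁ U₂ hU₂ _ _
      rw [subset_empty.mp hU₂, eDensity_empty_right, eDensity_empty_right]
      simp; linarith
    · rw [eDensity_empty_right]; linarith
    · intro v hv; simp at hv
    · intro v hv; simp only [card_empty, Nat.cast_zero, mul_zero]; positivity
  -- main case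
  have hn₁ : 0 < (V₁.card : ℝ) := by exact_mod_cast card_pos.mpr hne₁
  have hn₂ : 0 < (V₂.card : ℝ) := by exact_mod_cast card_pos.mpr hne₂
  obtain ⟨hm₁e, hm₁l, hm₁u⟩ := side_card hε hε2 hX₁ hY₁V₁ hX₁c hY₁c
  obtain ⟨hm₂e, hm₂l, hm₂u⟩ := side_card hε hε2 hX₂ hY₂V₂ hX₂c hY₂c
  have hm₁0 : 0 < ((((V₁ \ X₁) ∪ Y₁)).card : ℝ) := by nlinarith
  have hm₂0 : 0 < ((((V₂ \ X₂) ∪ Y₂)).card : ℝ) := by nlinarith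
  -- sub-pair comparison for (V₁ \ X₁, V₂ \ X₂)
  have hsd₁ : ((V₁ \ X₁).card : ℝ) = (V₁.card : ℝ) - X₁.card := by
    rw [card_sdiff_of_subset hX₁, Nat.cast_sub (card_le_card hX₁)]
  have hsd₂ : ((V₂ \ X₂).card : ℝ) = (V₂.card : ℝ) - X₂.card := by
    rw [card_sdiff_of_subset hX₂, Nat.cast_sub (card_le_card hX₂)]
  have hregV : |eDensity G (V₁ \ X₁) (V₂ \ X₂) - eDensity G V₁ V₂| ≤ ε := by
    apply hreg _ sdiff_subset _ sdiff_subset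
    · rw [hsd₁]; nlinarith [mul_le_mul_of_nonneg_right hε2.le hn₁.le]
    · rw [hsd₂]; nlinarith [mul_le_mul_of_nonneg_right hε2.le hn₂.le]
  have hpertV : |eDensity G ((V₁ \ X₁) ∪ Y₁) ((V₂ \ X₂) ∪ Y₂)
      - eDensity G (V₁ \ X₁) (V₂ \ X₂)| ≤ 2 * (2 * ε^2) := by
    apply eDensity_pert G (2 * ε^2) subset_union_left subset_union_left
      (by positivity) (by nlinarith) hm₁0 hm₂0
    · rw [hm₁e, hsd₁]
      nlinarith [mul_le_mul_of_nonneg_left hm₁l (show (0:ℝ) ≤ 2 * ε^2 by positivity),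
        mul_nonneg (mul_nonneg (sq_nonneg ε) (sq_nonneg ε)) hn₁.le]
    · rw [hm₂e, hsd₂]
      nlinarith [mul_le_mul_of_nonneg_left hm₂l (show (0:ℝ) ≤ 2 * ε^2 by positivity),
        mul_nonneg (mul_nonneg (sq_nonneg ε) (sq_nonneg ε)) hn₂.le]
  obtain ⟨hVl, hVr⟩ := abs_le.mp hregV
  obtain ⟨hPl, hPr⟩ := abs_le.mp hpertV
  refine ⟨?_, ?_, ?_, ?_⟩
  · -- regularity
    intro U₁' hU₁' U₂' hU₂' hc₁ hc₂
    obtain ⟨hs₁, he₁, hdf₁, hp₁⟩ := side_sub hε hε2 hX₁ hY₁V₁ hn₁ hX₁c hY₁c hU₁' hc₁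
    obtain ⟨hs₂, he₂, hdf₂, hp₂⟩ := side_sub hε hε2 hX₂ hY₂V₂ hn₂ hX₂c hY₂c hU₂' hc₂
    have hregU : |eDensity G (U₁' \ Y₁) (U₂' \ Y₂) - eDensity G V₁ V₂| ≤ ε :=
      hreg _ hs₁ _ hs₂ he₁ he₂
    have hpertU : |eDensity G U₁' U₂' - eDensity G (U₁' \ Y₁) (U₂' \ Y₂)| ≤ 2 * (ε/6) :=
      eDensity_pert G (ε/6) sdiff_subset sdiff_subset (by linarith) (by linarith)
        hp₁ hp₂ hdf₁ hdf₂
    obtain ⟨hUl, hUr⟩ := abs_le.mp hregU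
    obtain ⟨hQl, hQr⟩ := abs_le.mp hpertU
    rw [abs_le]
    constructor <;> linarith only [hUl, hUr, hQl, hQr, hVl, hVr, hPl, hPr, hεε, hε.le]
  · -- density
    linarith
  · -- degree into side 1
    intro v hv
    have hdv : δ * (V₁.card : ℝ) ≤ (degIn G v V₁ : ℝ) := by
      rcases mem_union.mp hv with h | h
      · exact hdeg₂ v (sdiff_subset h)
      · exact hdegY₂ v h
    have h1 : (degIn G v V₁ : ℝ) ≤ (degIn G v (V₁ \ X₁) : ℝ) + X₁.card := by
      exact_mod_cast degIn_sdiff G v V₁ X₁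
    have h2 : ((degIn G v (V₁ \ X₁)) : ℝ) ≤ (degIn G v ((V₁ \ X₁) ∪ Y₁) : ℝ) := by
      exact_mod_cast degIn_mono G v subset_union_left
    have hnum : δ/2 * ((1 + ε^2) * (V₁.card : ℝ)) ≤ δ * (V₁.card : ℝ) - ε^2 * (V₁.card : ℝ) := by
      have hin : (0:ℝ) ≤ (δ * (1 - ε^2) / 2 - ε^2) := by
        nlinarith [mul_nonneg (sub_nonneg.mpr hδε) (show (0:ℝ) ≤ 1 - ε^2 by nlinarith)]
      linarith [mul_nonneg hin hn₁.le]
    have hmono : δ/2 * ((((V₁ \ X₁) ∪ Y₁)).card : ℝ) ≤ δ/2 * ((1 + ε^2) * (V₁.card : ℝ)) :=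
      mul_le_mul_of_nonneg_left hm₁u (by linarith)
    linarith
  · -- degree into side 2
    intro v hv
    have hdv : δ * (V₂.card : ℝ) ≤ (degIn G v V₂ : ℝ) := by
      rcases mem_union.mp hv with h | h
      · exact hdeg₁ v (sdiff_subset h)
      · exact hdegY₁ v h
    have h1 : (degIn G v V₂ : ℝ) ≤ (degIn G v (V₂ \ X₂) : ℝ) + X₂.card := by
      exact_mod_cast degIn_sdiff G v V₂ X₂
    have h2 : ((degIn G v (V₂ \ X₂)) : ℝ) ≤ (degIn G v ((V₂ \ X₂) ∪ Y₂) : ℝ) := by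
      exact_mod_cast degIn_mono G v subset_union_left
    have hnum : δ/2 * ((1 + ε^2) * (V₂.card : ℝ)) ≤ δ * (V₂.card : ℝ) - ε^2 * (V₂.card : ℝ) := by
      have hin : (0:ℝ) ≤ (δ * (1 - ε^2) / 2 - ε^2) := by
        nlinarith [mul_nonneg (sub_nonneg.mpr hδε) (show (0:ℝ) ≤ 1 - ε^2 by nlinarith)]
      linarith [mul_nonneg hin hn₂.le]
    have hmono : δ/2 * ((((V₂ \ X₂) ∪ Y₂)).card : ℝ) ≤ δ/2 * ((1 + ε^2) * (V₂.card : ℝ)) :=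
      mul_le_mul_of_nonneg_left hm₂u (by linarith)
    linarith
end

section
/- Let k and N be positive integers and let H be a k-uniform hypergraph. Suppose B_1, ..., B_N ⊆ V(H) are non-empty disjoint sets such that for every 1 ≤ i_1 < ··· < i_k ≤ N and every v ∈ B_{i_1}, we have deg_H(v, B_{i_2}, ..., B_{i_k}) < binom(N, k)^{-1} · |B_{i_2}|···|B_{i_k}|. Then there exists an independent set {v_1, ..., v_N} of H with v_i ∈ B_i for each i ∈ [N]. -/
open Finset

/-- If `H` is a `k`-uniform hypergraph (with edge set `E`) and `B_1, …, B_N` are non-empty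
disjoint vertex sets such that for all indices `i_1 < ⋯ < i_k` (given by a strictly
monotone map `f : Fin k → Fin N`) and every `v ∈ B_{i_1}`, the number of tuples
`(v_2, …, v_k) ∈ B_{i_2} × ⋯ × B_{i_k}` with `{v, v_2, …, v_k} ∈ E` is less than
`(N choose k)⁻¹·|B_{i_2}|⋯|B_{i_k}|`, then there is an independent transversal
`{v_1, …, v_N}` with `v_i ∈ B_i`. -/
theorem independent_transversal {α : Type*} [DecidableEq α] (k N : ℕ)
    [NeZero k] [NeZero N]
    (E : Set (Finset α)) (hunif : ∀ e ∈ E, e.card = k)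
    (B : Fin N → Finset α) (hne : ∀ i, (B i).Nonempty)
    (hdisj : ∀ i j, i ≠ j → Disjoint (B i) (B j))
    (hdeg : ∀ f : Fin k → Fin N, StrictMono f → ∀ v ∈ B (f 0),
      (Set.ncard {w : Fin k → α | w 0 = v ∧ (∀ j : Fin k, j ≠ 0 → w j ∈ B (f j)) ∧
          Finset.univ.image w ∈ E} : ℝ) <
        ((N.choose k : ℝ))⁻¹ *
          ∏ j ∈ Finset.univ.erase (0 : Fin k), ((B (f j)).card : ℝ)) :
    ∃ v : Fin N → α, (∀ i, v i ∈ B i) ∧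
      ∀ e ∈ E, ¬ (e ⊆ Finset.univ.image v) := by
  classical
  set C : ℝ := (N.choose k : ℝ) with hC
  set T : Finset (Fin N → α) := Fintype.piFinset B with hTdef
  set Bad : Finset (Fin N → α) :=
    T.filter (fun v => ∃ e ∈ E, e ⊆ Finset.univ.image v) with hBadDef
  set F : Finset (Fin k → Fin N) := univ.filter StrictMono with hFdef
  set W : (Fin k → Fin N) → Finset (Fin k → α) :=
    fun f => (Fintype.piFinset (fun j => B (f j))).filter
      (fun w => Finset.univ.image w ∈ E) with hWdef
  set Tfw : (Fin k → Fin N) → (Fin k → α) → Finset (Fin N → α) :=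
    fun f w => T.filter (fun v => ∀ j, v (f j) = w j) with hTfwDef
  set P : (Fin k → Fin N) → ℝ :=
    fun f => ∏ i ∈ univ \ univ.image f, ((B i).card : ℝ) with hPdef
  have hPpos : ∀ f, 0 < P f := by
    intro f
    refine Finset.prod_pos fun i _ => ?_
    exact_mod_cast Finset.card_pos.2 (hne i)
  have hprodpos : (0 : ℝ) < ∏ i : Fin N, ((B i).card : ℝ) := by
    refine Finset.prod_pos fun i _ => ?_
    exact_mod_cast Finset.card_pos.2 (hne i)
  -- Step A : every bad transversal is covered
  have hsubA : Bad ⊆ F.biUnion (fun f => (W f).biUnion (fun w => Tfw f w)) := by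
    intro v hv
    rw [hBadDef, mem_filter] at hv
    obtain ⟨hvT, e, heE, hesub⟩ := hv
    have hvB : ∀ i, v i ∈ B i := by
      intro i; exact (Fintype.mem_piFinset.1 hvT) i
    have hvinj : Function.Injective v := by
      intro i j hij
      by_contra hne'
      exact (Finset.disjoint_left.1 (hdisj i j hne')) (hvB i) (hij ▸ hvB j)
    set I : Finset (Fin N) := univ.filter (fun i => v i ∈ e) with hI
    have hIe : I.image v = e := by
      apply Finset.Subset.antisymm
      · intro x hx
        simp only [hI, mem_image, mem_filter, mem_univ, true_and] at hx
        obtain ⟨i, hi, rfl⟩ := hx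
        exact hi
      · intro x hx
        obtain ⟨i, _, rfl⟩ := Finset.mem_image.1 (hesub hx)
        exact Finset.mem_image.2 ⟨i, by simp [hI, hx], rfl⟩
    have hIcard : I.card = k := by
      rw [← hunif e heE, ← hIe, Finset.card_image_of_injective _ hvinj]
    set f : Fin k → Fin N := fun j => I.orderEmbOfFin hIcard j with hf
    have hfmono : StrictMono f := (I.orderEmbOfFin hIcard).strictMono
    have hfF : f ∈ F := by simp [hFdef, hfmono]
    have hrange : univ.image f = I := by
      apply Finset.coe_injective
      rw [Finset.coe_image, Finset.coe_univ, Set.image_univ]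
      exact I.range_orderEmbOfFin hIcard
    have hwmem : (fun j => v (f j)) ∈ W f := by
      rw [hWdef, mem_filter]
      constructor
      · exact Fintype.mem_piFinset.2 fun j => hvB (f j)
      · have : univ.image (fun j => v (f j)) = e := by
          rw [show (fun j => v (f j)) = v ∘ f from rfl, ← Finset.image_image, hrange, hIe]
        rw [this]; exact heE
    refine Finset.mem_biUnion.2 ⟨f, hfF, Finset.mem_biUnion.2 ⟨_, hwmem, ?_⟩⟩
    rw [hTfwDef, mem_filter]
    exact ⟨hvT, fun j => rfl⟩
  -- Step C : card of each cell
  have hC1 : ∀ f, ∀ w : Fin k → α, ((Tfw f w).card : ℝ) ≤ P f := by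
    intro f w
    set B' : Fin N → Finset α :=
      fun i => if h : ∃ j, f j = i then ({w h.choose} : Finset α) else B i with hB'
    have hsub : Tfw f w ⊆ Fintype.piFinset B' := by
      intro v hv
      rw [hTfwDef, mem_filter] at hv
      obtain ⟨hvT, hvw⟩ := hv
      refine Fintype.mem_piFinset.2 fun i => ?_
      show v i ∈ B' i
      simp only [hB']
      by_cases h : ∃ j, f j = i
      · rw [dif_pos h, Finset.mem_singleton, ← hvw h.choose, h.choose_spec]
      · rw [dif_neg h]; exact (Fintype.mem_piFinset.1 hvT) i
    have hcard : ((Tfw f w).card : ℝ) ≤ ∏ i : Fin N, ((B' i).card : ℝ) := by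
      have := Finset.card_le_card hsub
      rw [Fintype.card_piFinset] at this
      exact_mod_cast this
    refine hcard.trans_eq ?_
    rw [← Finset.prod_sdiff (Finset.subset_univ (univ.image f))]
    have h1 : ∏ i ∈ univ.image f, ((B' i).card : ℝ) = 1 := by
      refine Finset.prod_eq_one fun i hi => ?_
      obtain ⟨j, _, rfl⟩ := Finset.mem_image.1 hi
      simp only [hB', dif_pos (⟨j, rfl⟩ : ∃ j', f j' = f j), Finset.card_singleton,
        Nat.cast_one]
    have h2 : ∏ i ∈ univ \ univ.image f, ((B' i).card : ℝ) = P f := by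
      refine Finset.prod_congr rfl fun i hi => ?_
      have : ¬ ∃ j, f j = i := by
        rintro ⟨j, rfl⟩
        exact (Finset.mem_sdiff.1 hi).2 (Finset.mem_image.2 ⟨j, Finset.mem_univ j, rfl⟩)
      simp only [hB', dif_neg this]
    rw [h1, h2, mul_one, hPdef]
  -- Step D : bound on |W f|
  have hD : ∀ f ∈ F, ((W f).card : ℝ) < C⁻¹ * ∏ j : Fin k, ((B (f j)).card : ℝ) := by
    intro f hf
    have hfmono : StrictMono f := (Finset.mem_filter.1 hf).2
    have hfib : (W f).card =
        ∑ v ∈ B (f 0), ((W f).filter (fun w => w 0 = v)).card := by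
      refine Finset.card_eq_sum_card_fiberwise fun w hw => ?_
      rw [Finset.mem_coe, hWdef, mem_filter] at hw
      exact (Fintype.mem_piFinset.1 hw.1) 0
    have hfiber : ∀ v ∈ B (f 0),
        (((W f).filter (fun w => w 0 = v)).card : ℝ) <
          C⁻¹ * ∏ j ∈ univ.erase (0 : Fin k), ((B (f j)).card : ℝ) := by
      intro v hv
      have hset : {w : Fin k → α | w 0 = v ∧ (∀ j : Fin k, j ≠ 0 → w j ∈ B (f j)) ∧
          Finset.univ.image w ∈ E} = ↑((W f).filter (fun w => w 0 = v)) := by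
        ext w
        simp only [Set.mem_setOf_eq, Finset.coe_filter, Set.mem_setOf_eq, hWdef,
          mem_filter, Fintype.mem_piFinset]
        constructor
        · rintro ⟨h0, hj, hE'⟩
          refine ⟨⟨fun j => ?_, hE'⟩, h0⟩
          by_cases hj0 : j = 0
          · rw [hj0, h0]; exact hv
          · exact hj j hj0
        · rintro ⟨⟨hj, hE'⟩, h0⟩
          exact ⟨h0, fun j _ => hj j, hE'⟩
      have := hdeg f hfmono v hv
      rw [hset, Set.ncard_coe_finset] at this
      exact this
    have hsum : ((W f).card : ℝ) <
        ∑ _v ∈ B (f 0), C⁻¹ * ∏ j ∈ univ.erase (0 : Fin k), ((B (f j)).card : ℝ) := by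
      rw [hfib, Nat.cast_sum]
      exact Finset.sum_lt_sum_of_nonempty (hne (f 0)) fun v hv => hfiber v hv
    rw [Finset.sum_const, nsmul_eq_mul] at hsum
    refine hsum.trans_le (le_of_eq ?_)
    rw [← Finset.mul_prod_erase univ (fun j => ((B (f j)).card : ℝ)) (Finset.mem_univ 0)]
    ring
  -- Step E : per f strict bound
  have hE1 : ∀ f ∈ F, ∑ w ∈ W f, ((Tfw f w).card : ℝ) <
      C⁻¹ * ∏ i : Fin N, ((B i).card : ℝ) := by
    intro f hf
    have hfmono : StrictMono f := (Finset.mem_filter.1 hf).2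
    have h1 : ∑ w ∈ W f, ((Tfw f w).card : ℝ) ≤ (W f).card * P f := by
      calc ∑ w ∈ W f, ((Tfw f w).card : ℝ) ≤ ∑ _w ∈ W f, P f :=
            Finset.sum_le_sum fun w _ => hC1 f w
        _ = (W f).card * P f := by rw [Finset.sum_const, nsmul_eq_mul]
    have h2 : ((W f).card : ℝ) * P f <
        (C⁻¹ * ∏ j : Fin k, ((B (f j)).card : ℝ)) * P f :=
      mul_lt_mul_of_pos_right (hD f hf) (hPpos f)
    refine (h1.trans_lt h2).trans_le (le_of_eq ?_)
    have himg : ∏ i ∈ univ.image f, ((B i).card : ℝ) =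
        ∏ j : Fin k, ((B (f j)).card : ℝ) :=
      Finset.prod_image fun x _ y _ h => hfmono.injective h
    rw [← himg, mul_assoc, mul_comm (∏ i ∈ univ.image f, ((B i).card : ℝ)) (P f), hPdef,
      Finset.prod_sdiff (Finset.subset_univ (univ.image f))]
  -- combine
  have hBadlt : (Bad.card : ℝ) < ∏ i : Fin N, ((B i).card : ℝ) := by
    have hB1 : (Bad.card : ℝ) ≤ ∑ f ∈ F, ∑ w ∈ W f, ((Tfw f w).card : ℝ) := by
      have h := (Finset.card_le_card hsubA).trans (Finset.card_biUnion_le)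
      have h2 : ∑ f ∈ F, ((W f).biUnion (fun w => Tfw f w)).card ≤
          ∑ f ∈ F, ∑ w ∈ W f, (Tfw f w).card :=
        Finset.sum_le_sum fun f _ => Finset.card_biUnion_le
      have := h.trans h2
      exact_mod_cast this
    rcases F.eq_empty_or_nonempty with hF | hFne
    · rw [hF] at hB1
      simpa using hB1.trans_lt (by simpa using hprodpos)
    · have hlt : ∑ f ∈ F, ∑ w ∈ W f, ((Tfw f w).card : ℝ) <
          ∑ _f ∈ F, C⁻¹ * ∏ i : Fin N, ((B i).card : ℝ) :=
        Finset.sum_lt_sum_of_nonempty hFne fun f hf => hE1 f hf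
      rw [Finset.sum_const, nsmul_eq_mul] at hlt
      refine (hB1.trans_lt hlt).trans_le ?_
      -- F.card ≤ N.choose k
      obtain ⟨f₀, hf₀⟩ := hFne
      have hkN : k ≤ N := by
        have : Function.Injective f₀ := ((Finset.mem_filter.1 hf₀).2).injective
        simpa using Fintype.card_le_of_injective f₀ this
      have hchoosepos : 0 < N.choose k := Nat.choose_pos hkN
      have hFcard : F.card ≤ N.choose k := by
        have hmaps : ∀ f ∈ F, univ.image f ∈ (univ : Finset (Fin N)).powersetCard k := by
          intro f hf
          have hfmono : StrictMono f := (Finset.mem_filter.1 hf).2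
          refine Finset.mem_powersetCard.2 ⟨Finset.subset_univ _, ?_⟩
          rw [Finset.card_image_of_injective _ hfmono.injective, Finset.card_univ,
            Fintype.card_fin]
        have hinj : Set.InjOn (fun f : Fin k → Fin N => univ.image f) ↑F := by
          intro f hf g hg hfg
          have hfmono : StrictMono f := (Finset.mem_filter.1 (Finset.mem_coe.1 hf)).2
          have hgmono : StrictMono g := (Finset.mem_filter.1 (Finset.mem_coe.1 hg)).2
          have hcf : (univ.image f).card = k := by
            rw [Finset.card_image_of_injective _ hfmono.injective, Finset.card_univ,
              Fintype.card_fin]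
          have h1 : f = (univ.image f).orderEmbOfFin hcf :=
            Finset.orderEmbOfFin_unique hcf
              (fun x => Finset.mem_image.2 ⟨x, Finset.mem_univ x, rfl⟩) hfmono
          have h2 : g = (univ.image f).orderEmbOfFin hcf := by
            refine Finset.orderEmbOfFin_unique hcf ?_ hgmono
            intro x
            have hfg' : univ.image f = univ.image g := hfg
            rw [hfg']
            exact Finset.mem_image.2 ⟨x, Finset.mem_univ x, rfl⟩
          rw [h1, h2]
        have := Finset.card_le_card_of_injOn _ hmaps hinj
        rwa [Finset.card_powersetCard, Finset.card_univ, Fintype.card_fin] at this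
      have hCpos : (0 : ℝ) < C := by rw [hC]; exact_mod_cast hchoosepos
      have hle : (F.card : ℝ) ≤ C := by rw [hC]; exact_mod_cast hFcard
      have this : (F.card : ℝ) * C⁻¹ ≤ 1 := by
        calc (F.card : ℝ) * C⁻¹ ≤ C * C⁻¹ :=
              mul_le_mul_of_nonneg_right hle (by positivity)
          _ = 1 := mul_inv_cancel₀ (ne_of_gt hCpos)
      calc (F.card : ℝ) * (C⁻¹ * ∏ i : Fin N, ((B i).card : ℝ))
          = (F.card : ℝ) * C⁻¹ * ∏ i : Fin N, ((B i).card : ℝ) := by ring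
        _ ≤ 1 * ∏ i : Fin N, ((B i).card : ℝ) :=
            mul_le_mul_of_nonneg_right this (le_of_lt hprodpos)
        _ = ∏ i : Fin N, ((B i).card : ℝ) := one_mul _
  have hTcard : (T.card : ℝ) = ∏ i : Fin N, ((B i).card : ℝ) := by
    rw [hTdef, Fintype.card_piFinset]; push_cast; rfl
  have hcard : Bad.card < T.card := by
    have : (Bad.card : ℝ) < (T.card : ℝ) := hTcard ▸ hBadlt
    exact_mod_cast this
  have hgood : (T \ Bad).Nonempty := by
    rw [Finset.sdiff_nonempty]
    intro hsub
    exact absurd (Finset.card_le_card hsub) (not_le.2 hcard)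
  obtain ⟨v, hv⟩ := hgood
  rw [Finset.mem_sdiff] at hv
  obtain ⟨hvT, hvBad⟩ := hv
  refine ⟨v, fun i => (Fintype.mem_piFinset.1 hvT) i, ?_⟩
  intro e heE hesub
  exact hvBad (by rw [hBadDef, mem_filter]; exact ⟨hvT, e, heE, hesub⟩)
end

section
/- Let k be a positive integer and d, ε > 0 with ε ≤ 1/(2k). If Z = (V_1, ..., V_k) is an ε-regular k-cylinder with d(V_i, V_j) ≥ d for all 1 ≤ i < j ≤ k, then there is some γ ≤ kε and sets Ṽ_1 ⊆ V_1, ..., Ṽ_k ⊆ V_k with |Ṽ_i| = ⌈(1 − γ)|V_i|⌉ for all i ∈ [k], such that the k-cylinder Z̃ = (Ṽ_1, ..., Ṽ_k) is (2ε, d − kε)-super-regular. -/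
open Finset

open Classical in
noncomputable def degF {α : Type*} (G : SimpleGraph α) (v : α) (A : Finset α) : ℕ :=
  (A.filter fun u => G.Adj v u).card

lemma degIn_eq_degF {α : Type*} (G : SimpleGraph α) (v : α) (A : Finset α) :
    degIn G v A = degF G v A := by
  classical
  unfold degIn degF
  rw [show {u : α | u ∈ A ∧ G.Adj v u} = ↑(A.filter fun u => G.Adj v u) by ext u; simp]
  rw [Set.ncard_coe_finset]

open Classical in
lemma ncard_pairs {α : Type*} (G : SimpleGraph α) (A B : Finset α) :
    Set.ncard {p : α × α | p.1 ∈ A ∧ p.2 ∈ B ∧ G.Adj p.1 p.2}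
      = ∑ v ∈ A, degF G v B := by
  classical
  rw [show {p : α × α | p.1 ∈ A ∧ p.2 ∈ B ∧ G.Adj p.1 p.2}
      = ↑((A ×ˢ B).filter fun p => G.Adj p.1 p.2) by
    ext ⟨a, b⟩; simp [Finset.mem_filter, and_assoc]]
  rw [Set.ncard_coe_finset]
  rw [Finset.card_eq_sum_card_fiberwise (f := Prod.fst) (t := A)
    (fun p hp => (Finset.mem_product.1 (Finset.mem_filter.1 hp).1).1)]
  refine Finset.sum_congr rfl fun v hv => ?_
  unfold degF
  rw [show (((A ×ˢ B).filter fun p => G.Adj p.1 p.2).filter fun p => p.1 = v)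
      = {v} ×ˢ (B.filter fun u => G.Adj v u) by
    ext ⟨a, b⟩
    simp only [Finset.mem_filter, Finset.mem_product, Finset.mem_singleton]
    constructor
    · rintro ⟨⟨⟨ha, hb⟩, hadj⟩, rfl⟩; exact ⟨rfl, hb, hadj⟩
    · rintro ⟨rfl, hb, hadj⟩; exact ⟨⟨⟨hv, hb⟩, hadj⟩, rfl⟩]
  rw [Finset.card_product, Finset.card_singleton, one_mul]

open Classical in
lemma degF_split {α : Type*} (G : SimpleGraph α) (v : α) {A B : Finset α} (h : A ⊆ B) :
    degF G v B ≤ degF G v A + (B.card - A.card) := by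
  unfold degF
  have hsub : B.filter (fun u => G.Adj v u)
      ⊆ (A.filter (fun u => G.Adj v u)) ∪ (B \ A) := by
    intro x hx
    rcases Finset.mem_filter.1 hx with ⟨hxB, hadj⟩
    by_cases hxA : x ∈ A
    · exact Finset.mem_union_left _ (Finset.mem_filter.2 ⟨hxA, hadj⟩)
    · exact Finset.mem_union_right _ (Finset.mem_sdiff.2 ⟨hxB, hxA⟩)
  calc (B.filter (fun u => G.Adj v u)).card
      ≤ ((A.filter (fun u => G.Adj v u)) ∪ (B \ A)).card := Finset.card_le_card hsub
    _ ≤ (A.filter (fun u => G.Adj v u)).card + (B \ A).card := Finset.card_union_le _ _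
    _ = (A.filter (fun u => G.Adj v u)).card + (B.card - A.card) := by
        rw [Finset.card_sdiff_of_subset h]

lemma eDensity_eq_sum {α : Type*} (G : SimpleGraph α) (A B : Finset α) :
    eDensity G A B = (∑ v ∈ A, (degF G v B : ℝ)) / ((A.card : ℝ) * B.card) := by
  rw [eDensity, ncard_pairs]; push_cast; ring_nf


set_option maxHeartbeats 1600000 in
/-- If `Z = (V_1, …, V_k)` is an `ε`-regular `k`-cylinder with all pairwise densities at
least `d` and `ε ≤ 1/(2k)`, then there is some `γ ≤ kε` and subsets `Ṽ_i ⊆ V_i` with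
`|Ṽ_i| = ⌈(1 − γ)|V_i|⌉` such that `(Ṽ_1, …, Ṽ_k)` is `(2ε, d − kε)`-super-regular. -/
theorem superregular_subcylinder {α : Type*} (k : ℕ) (hk : 0 < k) (d ε : ℝ)
    (hd : 0 < d) (hε : 0 < ε) (hεk : ε ≤ 1 / (2 * (k : ℝ)))
    (G : SimpleGraph α) (V : Fin k → Finset α)
    (hdisj : ∀ i j, i ≠ j → Disjoint (V i) (V j))
    (hreg : ∀ i j, i ≠ j → IsRegularPair G ε (V i) (V j))
    (hdens : ∀ i j, i ≠ j → d ≤ eDensity G (V i) (V j)) :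
    ∃ γ : ℝ, 0 ≤ γ ∧ γ ≤ (k : ℝ) * ε ∧
      ∃ W : Fin k → Finset α, (∀ i, W i ⊆ V i) ∧
        (∀ i, (W i).card = ⌈(1 - γ) * ((V i).card : ℝ)⌉₊) ∧
        ∀ i j, i ≠ j →
          IsSuperRegularPair G (2 * ε) (d - (k : ℝ) * ε) (d - (k : ℝ) * ε) (W i) (W j) := by
  classical
  rcases eq_or_lt_of_le (Nat.succ_le_of_lt hk) with hk1 | hk2
  · -- k = 1 : vacuous pair conditions
    refine ⟨0, le_refl 0, by positivity, V, fun i => Subset.rfl, fun i => by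
      norm_num, fun i j hij => ?_⟩
    exfalso
    apply hij
    have : k = 1 := hk1.symm
    subst this
    exact Subsingleton.elim i j
  · -- k ≥ 2
    have hk2' : 2 ≤ k := hk2
    have hk1R : (1 : ℝ) ≤ (k : ℝ) := by exact_mod_cast hk
    have hkpos : (0 : ℝ) < (k : ℝ) := by positivity
    have hkε : (k : ℝ) * ε ≤ 1 / 2 := by
      rw [le_div_iff₀ (by positivity)] at hεk
      nlinarith
    have hεhalf : ε ≤ 1 / 2 := by nlinarith
    set γ : ℝ := ((k : ℝ) - 1) * ε with hγdef
    have hγ0 : 0 ≤ γ := by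
      apply mul_nonneg (by linarith) hε.le
    have hγkε : γ ≤ (k : ℝ) * ε := by nlinarith
    have hγhalf : γ ≤ 1 / 2 := le_trans hγkε hkε
    -- all parts nonempty
    have hV : ∀ i, 0 < (V i).card := by
      intro i
      obtain ⟨j, hj⟩ := Fintype.exists_ne_of_one_lt_card (by simpa using hk2) i
      by_contra h
      have hcard : (V i).card = 0 := by omega
      have hVi : V i = ∅ := Finset.card_eq_zero.mp hcard
      have : eDensity G (V i) (V j) = 0 := by
        rw [eDensity_eq_sum, hVi]; simp
      have := hdens i j (Ne.symm hj)
      linarith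
    -- bad sets
    set B : Fin k → Fin k → Finset α := fun i j =>
      (V i).filter (fun v => (degF G v (V j) : ℝ) < (d - ε) * (V j).card) with hBdef
    have hB : ∀ i j, i ≠ j → ((B i j).card : ℝ) < ε * (V i).card := by
      intro i j hij
      by_contra h
      push_neg at h
      have hnj : (0 : ℝ) < (V j).card := by exact_mod_cast hV j
      have hni : (0 : ℝ) < (V i).card := by exact_mod_cast hV i
      have hBpos : (0 : ℝ) < (B i j).card := lt_of_lt_of_le (by positivity) h
      have hBne : (B i j).Nonempty := by
        rw [← Finset.card_pos]; exact_mod_cast hBpos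
      have hreg' := hreg i j hij (B i j) (Finset.filter_subset _ _) (V j) Subset.rfl h
        (by nlinarith)
      have hnum : (∑ v ∈ B i j, (degF G v (V j) : ℝ))
          < ∑ _v ∈ B i j, (d - ε) * (V j).card :=
        Finset.sum_lt_sum_of_nonempty hBne
          (fun v hv => (Finset.mem_filter.1 hv).2)
      rw [Finset.sum_const, nsmul_eq_mul] at hnum
      have hdde : eDensity G (B i j) (V j) < d - ε := by
        rw [eDensity_eq_sum, div_lt_iff₀ (by positivity)]
        nlinarith
      have hdV := hdens i j hij
      rw [abs_le] at hreg'
      linarith [hreg'.1]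
    set Bad : Fin k → Finset α := fun i => (Finset.univ.erase i).biUnion (fun j => B i j)
      with hBaddef
    have hBadcard : ∀ i, ((Bad i).card : ℝ) ≤ γ * (V i).card := by
      intro i
      have h1 : ((Bad i).card : ℝ) ≤ ∑ j ∈ Finset.univ.erase i, ((B i j).card : ℝ) := by
        exact_mod_cast Finset.card_biUnion_le
      have h2 : ∑ j ∈ Finset.univ.erase i, ((B i j).card : ℝ)
          ≤ ∑ _j ∈ Finset.univ.erase i, ε * (V i).card :=
        Finset.sum_le_sum fun j hj =>
          (hB i j (Ne.symm (Finset.mem_erase.1 hj).1)).le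
      rw [Finset.sum_const, nsmul_eq_mul] at h2
      have h3 : (Finset.univ.erase i).card = k - 1 := by
        rw [Finset.card_erase_of_mem (Finset.mem_univ i)]; simp
      rw [h3] at h2
      have h4 : ((k - 1 : ℕ) : ℝ) = (k : ℝ) - 1 := by
        have : 1 ≤ k := hk
        push_cast [Nat.cast_sub this]
        ring
      rw [h4] at h2
      calc ((Bad i).card : ℝ) ≤ ((k : ℝ) - 1) * (ε * (V i).card) := le_trans h1 h2
        _ = γ * (V i).card := by rw [hγdef]; ring
    -- feasibility
    have hm : ∀ i, ⌈(1 - γ) * ((V i).card : ℝ)⌉₊ ≤ (V i \ Bad i).card := by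
      intro i
      have hfl : (Bad i).card ≤ ⌊γ * ((V i).card : ℝ)⌋₊ := Nat.le_floor (hBadcard i)
      have hfl2 : ⌊γ * ((V i).card : ℝ)⌋₊ ≤ (V i).card := by
        have : γ * ((V i).card : ℝ) ≤ ((V i).card : ℝ) := by
          nlinarith [Nat.cast_nonneg (α := ℝ) (V i).card]
        calc ⌊γ * ((V i).card : ℝ)⌋₊ ≤ ⌊((V i).card : ℝ)⌋₊ := Nat.floor_le_floor this
          _ = (V i).card := Nat.floor_natCast _
      have hceil : ⌈(1 - γ) * ((V i).card : ℝ)⌉₊ ≤ (V i).card - ⌊γ * ((V i).card : ℝ)⌋₊ := by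
        rw [Nat.ceil_le]
        rw [Nat.cast_sub hfl2]
        have := Nat.floor_le (by positivity : (0:ℝ) ≤ γ * ((V i).card : ℝ))
        linarith
      have hsd : (V i).card - (Bad i).card ≤ (V i \ Bad i).card := Finset.le_card_sdiff _ _
      omega
    choose W hWsub hWcard using fun i => Finset.exists_subset_card_eq (hm i)
    have hWV : ∀ i, W i ⊆ V i := fun i => (hWsub i).trans (Finset.sdiff_subset)
    have hWlb : ∀ i, (1 - γ) * ((V i).card : ℝ) ≤ ((W i).card : ℝ) := by
      intro i; rw [hWcard]; exact Nat.le_ceil _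
    have hWub : ∀ i, ((W i).card : ℝ) ≤ ((V i).card : ℝ) := by
      intro i; exact_mod_cast Finset.card_le_card (hWV i)
    have hWhalf : ∀ i, ((V i).card : ℝ) / 2 ≤ ((W i).card : ℝ) := by
      intro i
      have := hWlb i
      nlinarith [Nat.cast_nonneg (α := ℝ) (V i).card]
    have hWsize : ∀ i, ε * ((V i).card : ℝ) ≤ ((W i).card : ℝ) := by
      intro i
      have := hWhalf i
      nlinarith [Nat.cast_nonneg (α := ℝ) (V i).card]
    -- closeness of densities
    have hclose : ∀ i j, i ≠ j →
        |eDensity G (W i) (W j) - eDensity G (V i) (V j)| ≤ ε := fun i j hij =>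
      hreg i j hij (W i) (hWV i) (W j) (hWV j) (hWsize i) (hWsize j)
    -- degree claim
    have hdeg : ∀ i j, i ≠ j → ∀ v ∈ W j,
        (d - (k : ℝ) * ε) * ((W i).card : ℝ) ≤ (degF G v (W i) : ℝ) := by
      intro i j hij v hv
      have hvV : v ∈ V j \ Bad j := hWsub j hv
      have hvB : v ∉ B j i := by
        intro h
        exact (Finset.mem_sdiff.1 hvV).2 (Finset.mem_biUnion.2
          ⟨i, Finset.mem_erase.2 ⟨hij, Finset.mem_univ i⟩, h⟩)
      have hdegV : (d - ε) * ((V i).card : ℝ) ≤ (degF G v (V i) : ℝ) := by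
        by_contra h
        push_neg at h
        exact hvB (Finset.mem_filter.2 ⟨(Finset.mem_sdiff.1 hvV).1, h⟩)
      have hsplit : (degF G v (V i) : ℝ)
          ≤ (degF G v (W i) : ℝ) + (((V i).card : ℝ) - ((W i).card : ℝ)) := by
        have h3 : (W i).card ≤ (V i).card := Finset.card_le_card (hWV i)
        have h1 := degF_split G v (hWV i)
        have := Nat.cast_le (α := ℝ) |>.2 h1
        push_cast [Nat.cast_sub h3] at this
        linarith
      have hgap : ((V i).card : ℝ) - ((W i).card : ℝ) ≤ γ * ((V i).card : ℝ) := by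
        have := hWlb i; nlinarith [Nat.cast_nonneg (α := ℝ) (V i).card]
      have hlow : (d - ε - γ) * ((V i).card : ℝ) ≤ (degF G v (W i) : ℝ) := by
        nlinarith
      rcases le_or_gt 0 (d - (k : ℝ) * ε) with hpos | hneg
      · have heq : (d - ε - γ) * ((V i).card : ℝ) = (d - (k : ℝ) * ε) * ((V i).card : ℝ) := by
          rw [hγdef]; ring
        have : (d - (k : ℝ) * ε) * ((W i).card : ℝ)
            ≤ (d - (k : ℝ) * ε) * ((V i).card : ℝ) :=
          mul_le_mul_of_nonneg_left (hWub i) hpos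
        linarith
      · have h1 : (d - (k : ℝ) * ε) * ((W i).card : ℝ) ≤ 0 :=
          mul_nonpos_of_nonpos_of_nonneg hneg.le (Nat.cast_nonneg _)
        have h2 : (0 : ℝ) ≤ (degF G v (W i) : ℝ) := Nat.cast_nonneg _
        linarith
    refine ⟨γ, hγ0, hγkε, W, hWV, fun i => hWcard i, fun i j hij => ?_⟩
    refine ⟨?_, ?_, ?_, ?_⟩
    · -- 2ε-regular
      intro U₁ hU₁ U₂ hU₂ h₁ h₂
      have hU₁' : ε * ((V i).card : ℝ) ≤ (U₁.card : ℝ) := by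
        have := hWhalf i; nlinarith
      have hU₂' : ε * ((V j).card : ℝ) ≤ (U₂.card : ℝ) := by
        have := hWhalf j; nlinarith
      have hA := hreg i j hij U₁ (hU₁.trans (hWV i)) U₂ (hU₂.trans (hWV j)) hU₁' hU₂'
      have hC := hclose i j hij
      calc |eDensity G U₁ U₂ - eDensity G (W i) (W j)|
          ≤ |eDensity G U₁ U₂ - eDensity G (V i) (V j)|
            + |eDensity G (V i) (V j) - eDensity G (W i) (W j)| := abs_sub_le _ _ _
        _ ≤ ε + ε := by
            rw [abs_sub_comm (eDensity G (V i) (V j))]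
            exact add_le_add hA hC
        _ = 2 * ε := by ring
    · -- density
      have hC := hclose i j hij
      have hdV := hdens i j hij
      have hεkε : ε ≤ (k : ℝ) * ε := by nlinarith
      rw [abs_le] at hC
      linarith [hC.1]
    · -- degrees into W i
      intro v hv
      rw [degIn_eq_degF]
      exact hdeg i j hij v hv
    · -- degrees into W j
      intro v hv
      rw [degIn_eq_degF]
      exact hdeg j i (Ne.symm hij) v hv
end
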